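/- Let H be a finite-dimensional Hopf algebra, D(H) its Drinfeld double with multiplication (φ ⊗ a)(ψ ⊗ b) = Σ ψ₂φ ⊗ a₂b ⟨S(a₁), ψ₁⟩⟨a₃, ψ₃⟩ (for φ, ψ ∈ H*, a, b ∈ H). Then every left-left Yetter–Drinfeld module V over H (a left H-module and left H-comodule satisfying Σ (a₁ ▷ v)₋₁ a₂ ⊗ (a₁ ▷ v)₀ = Σ a₁ v₋₁ ⊗ a₂ ▷ v₀) becomes a left D(H)-module via (φ ⊗ a) ▷ v = Σ ⟨(a ▷ v)₋₁, φ⟩ (a ▷ v)₀, and conversely. -/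

import Mathlib

open TensorProduct

variable (k H : Type*) [Field k] [Ring H] [HopfAlgebra k H] [FiniteDimensional k H]

/-- Conjugation `a ⊗ c ↦ (x ↦ S(a) x c)` as a map `H ⊗ H →ₗ End(H)`. -/
noncomputable def conjMap : H ⊗[k] H →ₗ[k] (H →ₗ[k] H) :=
  TensorProduct.lift
    ((((LinearMap.llcomp k H H H).flip ∘ₗ
        (LinearMap.mul k H) ∘ₗ (HopfAlgebra.antipode (R := k))).compl₂
      (LinearMap.mul k H).flip))

/-- `ψ ⊗ (a ⊗ c) ↦ (x ↦ ψ(S(a) x c))`. -/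
noncomputable def conjDual : (Module.Dual k H) ⊗[k] (H ⊗[k] H) →ₗ[k] Module.Dual k H :=
  TensorProduct.lift ((LinearMap.llcomp k H H k).compl₂ (conjMap k H))

/-- Convolution product on the dual: `(χ ⊗ φ) ↦ (x ↦ Σ χ(x₁) φ(x₂))`. -/
noncomputable def dualConv :
    (Module.Dual k H) ⊗[k] (Module.Dual k H) →ₗ[k] Module.Dual k H :=
  ((LinearMap.llcomp k H (H ⊗[k] H) k).flip (Coalgebra.comul (R := k))) ∘ₗ
    TensorProduct.dualDistrib k H H

/-- The iterated coproduct `a ↦ Σ a₂ ⊗ (a₁ ⊗ a₃)`. -/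
noncomputable def comulThree : H →ₗ[k] H ⊗[k] (H ⊗[k] H) :=
  (TensorProduct.assoc k H H H).toLinearMap ∘ₗ
    (TensorProduct.map (TensorProduct.comm k H H).toLinearMap LinearMap.id) ∘ₗ
      (TensorProduct.map (Coalgebra.comul (R := k)) LinearMap.id) ∘ₗ
        (Coalgebra.comul (R := k))

/-- The Drinfeld double multiplication on `H* ⊗ H`:
`(φ ⊗ a)(ψ ⊗ b) = Σ ψ₂ φ ⊗ a₂ b ⟨S(a₁), ψ₁⟩ ⟨a₃, ψ₃⟩`, where the functional
part equals `x ↦ Σ ψ(S(a₁) x₁ a₃) φ(x₂)`. -/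
noncomputable def doubleMulYD :
    ((Module.Dual k H) ⊗[k] H) ⊗[k] ((Module.Dual k H) ⊗[k] H) →ₗ[k]
      (Module.Dual k H) ⊗[k] H :=
  (TensorProduct.map (dualConv k H ∘ₗ (TensorProduct.comm k (Module.Dual k H)
        (Module.Dual k H)).toLinearMap) (LinearMap.mul' k H)) ∘ₗ
  (TensorProduct.tensorTensorTensorComm k (Module.Dual k H) H
      (Module.Dual k H) H).toLinearMap ∘ₗ
  (TensorProduct.map LinearMap.id
    ((TensorProduct.map (conjDual k H) LinearMap.id) ∘ₗ
      (TensorProduct.assoc k (Module.Dual k H) (H ⊗[k] H) H).symm.toLinearMap)) ∘ₗ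
  (TensorProduct.tensorTensorTensorComm k (Module.Dual k H) (Module.Dual k H)
      H ((H ⊗[k] H) ⊗[k] H)).toLinearMap ∘ₗ
  (TensorProduct.map LinearMap.id (TensorProduct.assoc k H (H ⊗[k] H) H).toLinearMap) ∘ₗ
  (TensorProduct.map LinearMap.id (TensorProduct.map (comulThree k H) LinearMap.id)) ∘ₗ
  (TensorProduct.tensorTensorTensorComm k (Module.Dual k H) H
      (Module.Dual k H) H).toLinearMap

variable {V : Type*} [AddCommGroup V] [Module k V]

/-- The module action `H ⊗ V → V` obtained from a bilinear action. -/
noncomputable def actT (act : H →ₗ[k] V →ₗ[k] V) : H ⊗[k] V →ₗ[k] V :=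
  TensorProduct.lift act

/-- The left-hand side of the Yetter–Drinfeld compatibility condition:
`a ⊗ v ↦ Σ (a₁ ▷ v)₋₁ a₂ ⊗ (a₁ ▷ v)₀`. -/
noncomputable def ydLHS (act : H →ₗ[k] V →ₗ[k] V) (δ : V →ₗ[k] H ⊗[k] V) :
    H ⊗[k] V →ₗ[k] H ⊗[k] V :=
  (TensorProduct.map ((LinearMap.mul' k H) ∘ₗ (TensorProduct.comm k H H).toLinearMap)
      LinearMap.id) ∘ₗ
    (TensorProduct.assoc k H H V).symm.toLinearMap ∘ₗ
      (TensorProduct.map LinearMap.id (δ ∘ₗ actT k H act)) ∘ₗ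
        (TensorProduct.assoc k H H V).toLinearMap ∘ₗ
          (TensorProduct.map (TensorProduct.comm k H H).toLinearMap LinearMap.id) ∘ₗ
            (TensorProduct.map (Coalgebra.comul (R := k)) LinearMap.id)

/-- The right-hand side of the Yetter–Drinfeld compatibility condition:
`a ⊗ v ↦ Σ a₁ v₋₁ ⊗ (a₂ ▷ v₀)`. -/
noncomputable def ydRHS (act : H →ₗ[k] V →ₗ[k] V) (δ : V →ₗ[k] H ⊗[k] V) :
    H ⊗[k] V →ₗ[k] H ⊗[k] V :=
  (TensorProduct.map (LinearMap.mul' k H) (actT k H act)) ∘ₗ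
    (TensorProduct.tensorTensorTensorComm k H H H V).toLinearMap ∘ₗ
      (TensorProduct.map (Coalgebra.comul (R := k)) LinearMap.id) ∘ₗ
        (TensorProduct.map LinearMap.id δ)

/-- The action of the Drinfeld double on `V`:
`(φ ⊗ a) ⊗ v ↦ Σ ⟨(a ▷ v)₋₁, φ⟩ (a ▷ v)₀`. -/
noncomputable def doubleAct (act : H →ₗ[k] V →ₗ[k] V) (δ : V →ₗ[k] H ⊗[k] V) :
    ((Module.Dual k H) ⊗[k] H) ⊗[k] V →ₗ[k] V :=
  (TensorProduct.lid k V).toLinearMap ∘ₗ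
    (TensorProduct.map (TensorProduct.lift (LinearMap.id (M := Module.Dual k H)))
      LinearMap.id) ∘ₗ
    (TensorProduct.assoc k (Module.Dual k H) H V).symm.toLinearMap ∘ₗ
      (TensorProduct.map LinearMap.id (δ ∘ₗ actT k H act)) ∘ₗ
        (TensorProduct.assoc k (Module.Dual k H) H V).toLinearMap
section Aux

set_option linter.unusedSectionVars false

open Coalgebra HopfAlgebra LinearMap

universe uK uH uW uW2
variable {k : Type uK} {H : Type uH} [Field k] [Ring H] [HopfAlgebra k H] [FiniteDimensional k H]
variable {W : Type uW} [AddCommGroup W] [Module k W] {W' : Type uW2} [AddCommGroup W'] [Module k W']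

/-- Apply a functional to the first tensor factor. -/
noncomputable def evl (φ : Module.Dual k H) : H ⊗[k] W →ₗ[k] W :=
  (TensorProduct.lid k W).toLinearMap ∘ₗ LinearMap.rTensor W φ

@[simp] lemma evl_tmul (φ : Module.Dual k H) (x : H) (w : W) :
    evl φ (x ⊗ₜ[k] w) = φ x • w := by simp [evl]

lemma evl_lTensor (f : W →ₗ[k] W') (φ : Module.Dual k H) (t : H ⊗[k] W) :
    f (evl φ t) = evl φ (LinearMap.lTensor H f t) := by
  induction t using TensorProduct.induction_on with
  | zero => simp
  | tmul x w => simp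
  | add s t hs ht => simp [map_add, hs, ht]

lemma evl_comp (g : H →ₗ[k] H) (φ : Module.Dual k H) (t : H ⊗[k] W) :
    evl (φ ∘ₗ g) t = evl φ (LinearMap.rTensor W g t) := by
  induction t using TensorProduct.induction_on with
  | zero => simp
  | tmul x w => simp
  | add s t hs ht => simp [map_add, hs, ht]

lemma evl_inj {t₁ t₂ : H ⊗[k] W} (h : ∀ φ : Module.Dual k H, evl φ t₁ = evl φ t₂) :
    t₁ = t₂ := by
  set e : H ⊗[k] W ≃ₗ[k] (Module.Dual k H →ₗ[k] W) :=
    (TensorProduct.congr (Module.evalEquiv k H) (LinearEquiv.refl k W)).trans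
      (dualTensorHomEquiv k (Module.Dual k H) W) with he
  have key : ∀ (t : H ⊗[k] W) (φ : Module.Dual k H), e t φ = evl φ t := by
    intro t φ
    induction t using TensorProduct.induction_on with
    | zero => simp
    | tmul x w => simp [he, Module.evalEquiv_apply]
    | add s t hs ht => simp only [map_add, LinearMap.add_apply, hs, ht]
  apply e.injective
  ext φ
  rw [key, key]; exact h φ

end Aux
section Aux2

set_option linter.unusedSectionVars false

open Coalgebra HopfAlgebra LinearMap

universe uK uH uW uW2
variable {k : Type uK} {H : Type uH} [Field k] [Ring H] [HopfAlgebra k H] [FiniteDimensional k H]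
variable {W : Type uW} [AddCommGroup W] [Module k W]

/-- `x ↦ (left multiplication by `x` on the first tensor factor)`. -/
noncomputable def rtL : H →ₗ[k] (H ⊗[k] W →ₗ[k] H ⊗[k] W) :=
  LinearMap.rTensorHom W ∘ₗ LinearMap.mul k H

/-- `x ↦ (left multiplication by `S x` on the first tensor factor)`. -/
noncomputable def rtLS : H →ₗ[k] (H ⊗[k] W →ₗ[k] H ⊗[k] W) :=
  LinearMap.rTensorHom W ∘ₗ LinearMap.mul k H ∘ₗ HopfAlgebra.antipode (R := k)

/-- `z ↦ (right multiplication by `z` on the first tensor factor)`. -/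
noncomputable def rtR : H →ₗ[k] (H ⊗[k] W →ₗ[k] H ⊗[k] W) :=
  LinearMap.rTensorHom W ∘ₗ (LinearMap.mul k H).flip

lemma mul_eq_mulLeft (x : H) : LinearMap.mul k H x = LinearMap.mulLeft k x := by
  ext y; simp

lemma mul_flip_eq_mulRight (z : H) : (LinearMap.mul k H).flip z = LinearMap.mulRight k z := by
  ext y; simp

lemma rtL_apply (x : H) :
    (rtL x : H ⊗[k] W →ₗ[k] H ⊗[k] W) = LinearMap.rTensor W (LinearMap.mulLeft k x) := by
  simp [rtL, mul_eq_mulLeft]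

lemma rtLS_apply (x : H) :
    (rtLS x : H ⊗[k] W →ₗ[k] H ⊗[k] W) =
      LinearMap.rTensor W (LinearMap.mulLeft k (HopfAlgebra.antipode (R := k) x)) := by
  simp [rtLS, mul_eq_mulLeft]

lemma rtR_apply (z : H) :
    (rtR z : H ⊗[k] W →ₗ[k] H ⊗[k] W) = LinearMap.rTensor W (LinearMap.mulRight k z) := by
  simp [rtR, mul_flip_eq_mulRight]

/-- Trilinear map `x ⊗ y ⊗ z ↦ g₁ x (g₃ z (m y))`. -/
noncomputable def tri₁ (g₁ g₃ : H →ₗ[k] (W →ₗ[k] W)) (m : H →ₗ[k] W) :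
    H →ₗ[k] H →ₗ[k] H →ₗ[k] W where
  toFun x := ((g₃.compl₂ m).flip).compr₂ (g₁ x)
  map_add' x y := by ext; simp
  map_smul' c x := by ext; simp

@[simp] lemma tri₁_apply (g₁ g₃ : H →ₗ[k] (W →ₗ[k] W)) (m : H →ₗ[k] W) (x y z : H) :
    tri₁ g₁ g₃ m x y z = g₁ x (g₃ z (m y)) := rfl

/-- Trilinear map `x ⊗ y ⊗ z ↦ g₁ x (g₂ y (g₃ z t))`. -/
noncomputable def tri₂ (g₁ g₂ g₃ : H →ₗ[k] (W →ₗ[k] W)) (t : W) :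
    H →ₗ[k] H →ₗ[k] H →ₗ[k] W where
  toFun x := ((g₂.compl₂ (g₃.flip t)).compr₂ (g₁ x))
  map_add' x y := by ext; simp
  map_smul' c x := by ext; simp

@[simp] lemma tri₂_apply (g₁ g₂ g₃ : H →ₗ[k] (W →ₗ[k] W)) (t : W) (x y z : H) :
    tri₂ g₁ g₂ g₃ t x y z = g₁ x (g₂ y (g₃ z t)) := rfl

/-- Bilinear map `w ⊗ z ↦ g₁ w (g₃ z t)`. -/
noncomputable def bi (g₁ g₃ : H →ₗ[k] (W →ₗ[k] W)) (t : W) : H →ₗ[k] H →ₗ[k] W :=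
  g₁.compl₂ (g₃.flip t)

@[simp] lemma bi_apply (g₁ g₃ : H →ₗ[k] (W →ₗ[k] W)) (t : W) (w z : H) :
    bi g₁ g₃ t w z = g₁ w (g₃ z t) := rfl

/-- Lift of a trilinear map to `H ⊗ (H ⊗ H)`. -/
noncomputable def lift₃ (F : H →ₗ[k] H →ₗ[k] H →ₗ[k] W) : H ⊗[k] (H ⊗[k] H) →ₗ[k] W :=
  TensorProduct.lift ((TensorProduct.lift.equiv (RingHom.id k) H H W).toLinearMap ∘ₗ F)

@[simp] lemma lift₃_tmul (F : H →ₗ[k] H →ₗ[k] H →ₗ[k] W) (x y z : H) :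
    lift₃ F (x ⊗ₜ[k] (y ⊗ₜ[k] z)) = F x y z := by
  simp [lift₃, TensorProduct.lift.equiv]

end Aux2
section Aux3

set_option linter.unusedSectionVars false
set_option maxHeartbeats 1000000

open Coalgebra HopfAlgebra LinearMap

universe uK uH uW uW2
variable {k : Type uK} {H : Type uH} [Field k] [Ring H] [HopfAlgebra k H] [FiniteDimensional k H]
variable {W : Type uW} [AddCommGroup W] [Module k W]

lemma conjMap_tmul (y z x : H) :
    conjMap k H (y ⊗ₜ[k] z) x = HopfAlgebra.antipode (R := k) y * x * z := by
  simp [conjMap, mul_assoc]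

lemma conjMap_eq (y z : H) :
    conjMap k H (y ⊗ₜ[k] z) =
      LinearMap.mulLeft k (HopfAlgebra.antipode (R := k) y) ∘ₗ LinearMap.mulRight k z := by
  ext x; simp [conjMap_tmul, mul_assoc]

lemma conj_decomp (y z : H) (t : H ⊗[k] W) :
    LinearMap.rTensor W (conjMap k H (y ⊗ₜ[k] z)) t =
      LinearMap.rTensor W (LinearMap.mulLeft k (HopfAlgebra.antipode (R := k) y))
        (LinearMap.rTensor W (LinearMap.mulRight k z) t) := by
  rw [conjMap_eq, LinearMap.rTensor_comp]; rfl

lemma conjDual_tmul (ψ : Module.Dual k H) (t : H ⊗[k] H) :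
    conjDual k H (ψ ⊗ₜ[k] t) = ψ ∘ₗ conjMap k H t := by
  simp [conjDual]; rfl

lemma dualConv_tmul (χ φ : Module.Dual k H) :
    dualConv k H (χ ⊗ₜ[k] φ) =
      TensorProduct.dualDistrib k H H (χ ⊗ₜ[k] φ) ∘ₗ Coalgebra.comul (R := k) := by
  simp [dualConv]; rfl

lemma evl_dualConv (χ φ : Module.Dual k H) (t : H ⊗[k] W) :
    evl (dualConv k H (χ ⊗ₜ[k] φ)) t =
      evl φ (evl χ ((TensorProduct.assoc k H H W)
        (LinearMap.rTensor W (Coalgebra.comul (R := k)) t))) := by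
  induction t using TensorProduct.induction_on with
  | zero => simp
  | tmul x w =>
      rw [dualConv_tmul]
      have : ∀ u : H ⊗[k] H,
          evl φ (evl χ ((TensorProduct.assoc k H H W) (u ⊗ₜ[k] w))) =
            TensorProduct.dualDistrib k H H (χ ⊗ₜ[k] φ) u • w := by
        intro u
        induction u using TensorProduct.induction_on with
        | zero => simp
        | tmul y z => simp [smul_smul]
        | add s t hs ht => simp only [map_add, TensorProduct.add_tmul, hs, ht, add_smul]
      simp only [LinearMap.rTensor_tmul, evl_tmul, LinearMap.coe_comp, Function.comp_apply,
        this]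
  | add s t hs ht => simp only [map_add, hs, ht]

end Aux3
section Aux4

set_option linter.unusedSectionVars false
set_option maxHeartbeats 1000000
set_option synthInstance.maxHeartbeats 1000000

open Coalgebra HopfAlgebra LinearMap

universe uK uH uW uW2
variable {k : Type uK} {H : Type uH} [Field k] [Ring H] [HopfAlgebra k H] [FiniteDimensional k H]
variable {V : Type uW} [AddCommGroup V] [Module k V]
variable (act : H →ₗ[k] V →ₗ[k] V) (δ : V →ₗ[k] H ⊗[k] V)

lemma doubleAct_tmul (φ : Module.Dual k H) (a : H) (v : V) :
    doubleAct k H act δ ((φ ⊗ₜ[k] a) ⊗ₜ[k] v) = evl φ (δ (act a v)) := by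
  have key : ∀ t : H ⊗[k] V,
      (TensorProduct.lid k V)
        ((TensorProduct.map (TensorProduct.lift (LinearMap.id (M := Module.Dual k H)))
          LinearMap.id)
        ((TensorProduct.assoc k (Module.Dual k H) H V).symm (φ ⊗ₜ[k] t))) = evl φ t := by
    intro t
    induction t using TensorProduct.induction_on with
    | zero => simp
    | tmul x w => simp
    | add s t hs ht => simp only [TensorProduct.tmul_add, map_add, hs, ht]
  simp only [doubleAct, LinearMap.coe_comp, Function.comp_apply, LinearEquiv.coe_coe,
    TensorProduct.assoc_tmul, TensorProduct.map_tmul, LinearMap.id_coe, id_eq,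
    actT, TensorProduct.lift.tmul]
  exact key _

lemma comulThree_eq (a : H) (r : Coalgebra.Repr k a (H × H))
    (r1 : ∀ i, Coalgebra.Repr k (r.left i) (H × H)) :
    comulThree k H a = ∑ i ∈ r.index, ∑ j ∈ (r1 i).index,
      (r1 i).right j ⊗ₜ[k] ((r1 i).left j ⊗ₜ[k] r.right i) := by
  simp only [comulThree, LinearMap.coe_comp, Function.comp_apply, LinearEquiv.coe_coe]
  rw [← r.eq, map_sum, map_sum, map_sum]
  refine Finset.sum_congr rfl fun i _ => ?_
  rw [TensorProduct.map_tmul, LinearMap.id_coe, id_eq, ← (r1 i).eq, TensorProduct.sum_tmul,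
    map_sum, map_sum]
  refine Finset.sum_congr rfl fun j _ => ?_
  simp

lemma doubleMulYD_tmul (φ ψ : Module.Dual k H) (a b : H) (r : Coalgebra.Repr k a (H × H))
    (r1 : ∀ i, Coalgebra.Repr k (r.left i) (H × H)) :
    doubleMulYD k H ((φ ⊗ₜ[k] a) ⊗ₜ[k] (ψ ⊗ₜ[k] b)) =
      ∑ i ∈ r.index, ∑ j ∈ (r1 i).index,
        (dualConv k H (conjDual k H (ψ ⊗ₜ[k] ((r1 i).left j ⊗ₜ[k] r.right i)) ⊗ₜ[k] φ))
          ⊗ₜ[k] ((r1 i).right j * b) := by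
  simp only [doubleMulYD, LinearMap.coe_comp, Function.comp_apply, LinearEquiv.coe_coe,
    TensorProduct.tensorTensorTensorComm_tmul, TensorProduct.map_tmul, LinearMap.id_coe,
    id_eq, comulThree_eq a r r1]
  simp only [TensorProduct.sum_tmul, TensorProduct.tmul_sum, map_sum]
  refine Finset.sum_congr rfl fun i _ => Finset.sum_congr rfl fun j _ => ?_
  simp [TensorProduct.tensorTensorTensorComm_tmul, LinearMap.mul'_apply]

end Aux4
section Aux5

set_option linter.unusedSectionVars false
set_option maxHeartbeats 1000000
set_option synthInstance.maxHeartbeats 1000000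

open Coalgebra HopfAlgebra LinearMap

universe uK uH uW uW2
variable {k : Type uK} {H : Type uH} [Field k] [Ring H] [HopfAlgebra k H] [FiniteDimensional k H]

lemma sum_counit_smul {a : H} (r : Coalgebra.Repr k a (H × H)) :
    ∑ i ∈ r.index, Coalgebra.counit (R := k) (r.left i) • r.right i = a := by
  have h := Coalgebra.sum_counit_tmul_eq (R := k) r
  have h2 := congrArg (TensorProduct.lid k H) h
  rw [map_sum] at h2
  simpa using h2

lemma identity3 (a : H) (r : Coalgebra.Repr k a (H × H))
    (r1 : ∀ i, Coalgebra.Repr k (r.left i) (H × H)) :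
    ∑ i ∈ r.index, ∑ j ∈ (r1 i).index,
      (HopfAlgebra.antipode (R := k) ((r1 i).left j) * (r1 i).right j) ⊗ₜ[k] r.right i
      = (1 : H) ⊗ₜ[k] a := by
  have step1 : ∀ i ∈ r.index, ∑ j ∈ (r1 i).index,
      (HopfAlgebra.antipode (R := k) ((r1 i).left j) * (r1 i).right j) ⊗ₜ[k] r.right i
      = (1 : H) ⊗ₜ[k] (Coalgebra.counit (R := k) (r.left i) • r.right i) := by
    intro i _
    rw [← TensorProduct.sum_tmul, HopfAlgebra.sum_antipode_mul_eq_smul (r1 i),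
      TensorProduct.smul_tmul]
  rw [Finset.sum_congr rfl step1, ← TensorProduct.tmul_sum, _root_.sum_counit_smul]

lemma identity4 (a : H) (r : Coalgebra.Repr k a (H × H))
    (rc : ∀ i, Coalgebra.Repr k (r.right i) (H × H))
    (rc1 : ∀ i j, Coalgebra.Repr k ((rc i).left j) (H × H)) :
    ∑ i ∈ r.index, ∑ j ∈ (rc i).index, ∑ l ∈ (rc1 i j).index,
      (r.left i * HopfAlgebra.antipode (R := k) ((rc1 i j).left l)) ⊗ₜ[k]
        ((rc1 i j).right l ⊗ₜ[k] (rc i).right j)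
      = (1 : H) ⊗ₜ[k] (Coalgebra.comul (R := k) a) := by
  set m₂ : H ⊗[k] H →ₗ[k] H :=
    LinearMap.mul' k H ∘ₗ LinearMap.lTensor H (HopfAlgebra.antipode (R := k)) with hm₂
  set M4 : H ⊗[k] (H ⊗[k] (H ⊗[k] H)) →ₗ[k] H ⊗[k] (H ⊗[k] H) :=
    LinearMap.rTensor (H ⊗[k] H) m₂ ∘ₗ
      (TensorProduct.assoc k H H (H ⊗[k] H)).symm.toLinearMap with hM4
  have hM4p : ∀ (x y : H) (u : H ⊗[k] H), M4 (x ⊗ₜ[k] (y ⊗ₜ[k] u)) = (x * HopfAlgebra.antipode (R := k) y) ⊗ₜ[k] u := by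
    intro x y u
    simp [hM4, hm₂, TensorProduct.assoc_symm_tmul]
  -- Expansion of the left-hand side as a canonical map applied to `comul a`
  have inner : ∀ i, ∑ j ∈ (rc i).index, ∑ l ∈ (rc1 i j).index,
      (rc1 i j).left l ⊗ₜ[k] ((rc1 i j).right l ⊗ₜ[k] (rc i).right j)
      = LinearMap.lTensor H (Coalgebra.comul (R := k)) (Coalgebra.comul (R := k) (r.right i)) := by
    intro i
    rw [← Coalgebra.coassoc_apply (r.right i), ← (rc i).eq, map_sum, map_sum]
    refine Finset.sum_congr rfl fun j _ => ?_
    rw [LinearMap.rTensor_tmul, ← (rc1 i j).eq, TensorProduct.sum_tmul, map_sum]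
    refine Finset.sum_congr rfl fun l _ => ?_
    simp
  have expand : ∑ i ∈ r.index, ∑ j ∈ (rc i).index, ∑ l ∈ (rc1 i j).index,
      r.left i ⊗ₜ[k] ((rc1 i j).left l ⊗ₜ[k] ((rc1 i j).right l ⊗ₜ[k] (rc i).right j))
      = LinearMap.lTensor H
          (LinearMap.lTensor H (Coalgebra.comul (R := k)) ∘ₗ Coalgebra.comul (R := k))
          (Coalgebra.comul (R := k) a) := by
    rw [← r.eq, map_sum]
    refine Finset.sum_congr rfl fun i _ => ?_
    rw [LinearMap.lTensor_tmul, LinearMap.coe_comp, Function.comp_apply, ← inner i,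
      TensorProduct.tmul_sum]
    refine Finset.sum_congr rfl fun j _ => ?_
    rw [TensorProduct.tmul_sum]
  -- transfer
  have transfer : ∑ i ∈ r.index, ∑ j ∈ (rc i).index, ∑ l ∈ (rc1 i j).index,
      (r.left i * HopfAlgebra.antipode (R := k) ((rc1 i j).left l)) ⊗ₜ[k]
        ((rc1 i j).right l ⊗ₜ[k] (rc i).right j)
      = M4 (LinearMap.lTensor H
          (LinearMap.lTensor H (Coalgebra.comul (R := k)) ∘ₗ Coalgebra.comul (R := k))
          (Coalgebra.comul (R := k) a)) := by
    rw [← expand, map_sum]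
    refine Finset.sum_congr rfl fun i _ => ?_
    rw [map_sum]
    refine Finset.sum_congr rfl fun j _ => ?_
    rw [map_sum]
    refine Finset.sum_congr rfl fun l _ => ?_
    rw [hM4p]
  rw [transfer]
  -- now the map-level computation
  have C1 : M4 ∘ₗ LinearMap.lTensor H (LinearMap.lTensor H (Coalgebra.comul (R := k))) ∘ₗ
      (TensorProduct.assoc k H H H).toLinearMap
      = LinearMap.lTensor H (Coalgebra.comul (R := k)) ∘ₗ LinearMap.rTensor H m₂ := by
    apply TensorProduct.ext_threefold
    intro x y z
    simp [hM4, hm₂, TensorProduct.assoc_symm_tmul]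
  have step1 : LinearMap.lTensor H
      (LinearMap.lTensor H (Coalgebra.comul (R := k)) ∘ₗ Coalgebra.comul (R := k))
      (Coalgebra.comul (R := k) a)
      = LinearMap.lTensor H (LinearMap.lTensor H (Coalgebra.comul (R := k)))
          ((TensorProduct.assoc k H H H)
            (LinearMap.rTensor H (Coalgebra.comul (R := k)) (Coalgebra.comul (R := k) a))) := by
    rw [LinearMap.lTensor_comp, LinearMap.coe_comp, Function.comp_apply,
      Coalgebra.coassoc_apply]
  rw [step1]
  have := LinearMap.congr_fun C1 (LinearMap.rTensor H (Coalgebra.comul (R := k)) (Coalgebra.comul (R := k) a))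
  -- `this` is not directly usable; compute instead:
  have step2 : M4 (LinearMap.lTensor H (LinearMap.lTensor H (Coalgebra.comul (R := k)))
      ((TensorProduct.assoc k H H H)
        (LinearMap.rTensor H (Coalgebra.comul (R := k)) (Coalgebra.comul (R := k) a))))
      = LinearMap.lTensor H (Coalgebra.comul (R := k))
          (LinearMap.rTensor H m₂
            (LinearMap.rTensor H (Coalgebra.comul (R := k)) (Coalgebra.comul (R := k) a))) := by
    exact LinearMap.congr_fun C1 _
  rw [step2]
  have comb1 : ∀ u : H ⊗[k] H, LinearMap.rTensor H m₂ (LinearMap.rTensor H (Coalgebra.comul (R := k)) u)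
      = LinearMap.rTensor H (m₂ ∘ₗ Coalgebra.comul (R := k)) u := by
    intro u
    induction u using TensorProduct.induction_on with
    | zero => simp
    | tmul x y => simp
    | add s t hs ht => simp [map_add, hs, ht]
  rw [comb1]
  have hopf : m₂ ∘ₗ Coalgebra.comul (R := k) = Algebra.linearMap k H ∘ₗ Coalgebra.counit (R := k) := by
    rw [hm₂, LinearMap.comp_assoc]
    exact HopfAlgebra.mul_antipode_lTensor_comul
  rw [hopf]
  have comb2 : ∀ u : H ⊗[k] H, LinearMap.rTensor H (Algebra.linearMap k H ∘ₗ Coalgebra.counit (R := k)) u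
      = LinearMap.rTensor H (Algebra.linearMap k H) (LinearMap.rTensor H (Coalgebra.counit (R := k)) u) := by
    intro u
    induction u using TensorProduct.induction_on with
    | zero => simp
    | tmul x y => simp
    | add s t hs ht => simp [map_add, hs, ht]
  rw [comb2]
  have hcnt : LinearMap.rTensor H (Coalgebra.counit (R := k)) (Coalgebra.comul (R := k) a)
      = (1 : k) ⊗ₜ[k] a := Coalgebra.rTensor_counit_comul a
  rw [hcnt]
  simp

end Aux5
section Aux6

set_option linter.unusedSectionVars false
set_option maxHeartbeats 1000000
set_option synthInstance.maxHeartbeats 1000000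

open Coalgebra HopfAlgebra LinearMap

universe uK uH uW uW2
variable {k : Type uK} {H : Type uH} [Field k] [Ring H] [HopfAlgebra k H] [FiniteDimensional k H]
variable {V : Type uW} [AddCommGroup V] [Module k V]
variable (act : H →ₗ[k] V →ₗ[k] V) (δ : V →ₗ[k] H ⊗[k] V)

lemma ydLHS_aux (x : H) (t : H ⊗[k] V) :
    (TensorProduct.map ((LinearMap.mul' k H) ∘ₗ (TensorProduct.comm k H H).toLinearMap)
        LinearMap.id)
      ((TensorProduct.assoc k H H V).symm (x ⊗ₜ[k] t)) =
    LinearMap.rTensor V (LinearMap.mulRight k x) t := by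
  induction t using TensorProduct.induction_on with
  | zero => simp
  | tmul h w => simp [TensorProduct.assoc_symm_tmul]
  | add s t hs ht => simp only [TensorProduct.tmul_add, map_add, hs, ht]

lemma ydRHS_aux (l rr : H) (t : H ⊗[k] V) :
    (TensorProduct.map (LinearMap.mul' k H) (actT k H act))
      ((TensorProduct.tensorTensorTensorComm k H H H V) ((l ⊗ₜ[k] rr) ⊗ₜ[k] t)) =
    LinearMap.rTensor V (LinearMap.mulLeft k l) (LinearMap.lTensor H (act rr) t) := by
  induction t using TensorProduct.induction_on with
  | zero => simp
  | tmul h w => simp [TensorProduct.tensorTensorTensorComm_tmul, actT]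
  | add s t hs ht => simp only [TensorProduct.tmul_add, map_add, hs, ht]

lemma ydLHS_tmul (a : H) (v : V) (r : Coalgebra.Repr k a (H × H)) :
    ydLHS k H act δ (a ⊗ₜ[k] v) =
      ∑ i ∈ r.index, LinearMap.rTensor V (LinearMap.mulRight k (r.right i))
        (δ (act (r.left i) v)) := by
  simp only [ydLHS, LinearMap.coe_comp, Function.comp_apply, LinearEquiv.coe_coe]
  rw [TensorProduct.map_tmul, LinearMap.id_coe, id_eq, ← r.eq, TensorProduct.sum_tmul,
    map_sum, map_sum, map_sum, map_sum, map_sum]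
  refine Finset.sum_congr rfl fun i _ => ?_
  simp only [TensorProduct.map_tmul, LinearEquiv.coe_coe, TensorProduct.comm_tmul,
    LinearMap.id_coe, id_eq, TensorProduct.assoc_tmul, LinearMap.coe_comp,
    Function.comp_apply, actT, TensorProduct.lift.tmul]
  exact ydLHS_aux (r.right i) _

lemma ydRHS_tmul (a : H) (v : V) (r : Coalgebra.Repr k a (H × H)) :
    ydRHS k H act δ (a ⊗ₜ[k] v) =
      ∑ i ∈ r.index, LinearMap.rTensor V (LinearMap.mulLeft k (r.left i))
        (LinearMap.lTensor H (act (r.right i)) (δ v)) := by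
  simp only [ydRHS, LinearMap.coe_comp, Function.comp_apply, LinearEquiv.coe_coe]
  rw [TensorProduct.map_tmul, LinearMap.id_coe, id_eq, TensorProduct.map_tmul,
    LinearMap.id_coe, id_eq, ← r.eq, TensorProduct.sum_tmul, map_sum, map_sum]
  exact Finset.sum_congr rfl fun i _ => ydRHS_aux act (r.left i) (r.right i) _

lemma yd_iff_YDE : ydLHS k H act δ = ydRHS k H act δ ↔
    (∀ (a : H) (v : V) (r : Coalgebra.Repr.{uK, uH, uH} k a (H × H)),
      ∑ i ∈ r.index, LinearMap.rTensor V (LinearMap.mulRight k (r.right i))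
          (δ (act (r.left i) v))
      = ∑ i ∈ r.index, LinearMap.rTensor V (LinearMap.mulLeft k (r.left i))
          (LinearMap.lTensor H (act (r.right i)) (δ v))) := by
  constructor
  · intro h a v r
    have := LinearMap.congr_fun h (a ⊗ₜ[k] v)
    rwa [ydLHS_tmul act δ a v r, ydRHS_tmul act δ a v r] at this
  · intro h
    apply TensorProduct.ext'
    intro a v
    rw [ydLHS_tmul act δ a v (Coalgebra.Repr.arbitrary k a),
      ydRHS_tmul act δ a v (Coalgebra.Repr.arbitrary k a)]
    exact h a v (Coalgebra.Repr.arbitrary k a)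

end Aux6
section Aux7

set_option linter.unusedSectionVars false
set_option maxHeartbeats 1000000
set_option synthInstance.maxHeartbeats 1000000

open Coalgebra HopfAlgebra LinearMap

universe uK uH uW uW2
variable {k : Type uK} {H : Type uH} [Field k] [Ring H] [HopfAlgebra k H] [FiniteDimensional k H]
variable {V : Type uW} [AddCommGroup V] [Module k V]
variable (act : H →ₗ[k] V →ₗ[k] V) (δ : V →ₗ[k] H ⊗[k] V)

/-- `z ↦ (action of `z` on the second tensor factor)`. -/
noncomputable def ltA : H →ₗ[k] (H ⊗[k] V →ₗ[k] H ⊗[k] V) :=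
  LinearMap.lTensorHom H ∘ₗ act

lemma ltA_apply (z : H) : ltA act z = LinearMap.lTensor H (act z) := rfl

lemma rtL_one : (rtL (1 : H) : H ⊗[k] V →ₗ[k] H ⊗[k] V) = LinearMap.id := by
  rw [rtL_apply, LinearMap.mulLeft_one, LinearMap.rTensor_id]

lemma YDE_to_TP
    (h : ∀ (a : H) (v : V) (r : Coalgebra.Repr.{uK, uH, uH} k a (H × H)),
      ∑ i ∈ r.index, LinearMap.rTensor V (LinearMap.mulRight k (r.right i))
          (δ (act (r.left i) v))
      = ∑ i ∈ r.index, LinearMap.rTensor V (LinearMap.mulLeft k (r.left i))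
          (LinearMap.lTensor H (act (r.right i)) (δ v))) :
    ∀ (a : H) (v : V) (r : Coalgebra.Repr.{uK, uH, uH} k a (H × H))
      (r1 : ∀ i, Coalgebra.Repr.{uK, uH, uH} k (r.left i) (H × H)),
    ∑ i ∈ r.index, ∑ j ∈ (r1 i).index,
      LinearMap.rTensor V (conjMap k H ((r1 i).left j ⊗ₜ[k] r.right i))
        (δ (act ((r1 i).right j) v))
    = LinearMap.lTensor H (act a) (δ v) := by
  intro a v r r1
  set m : H →ₗ[k] H ⊗[k] V := δ ∘ₗ act.flip v with hm
  have hmx : ∀ x : H, m x = δ (act x v) := fun x => rfl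
  set G : H →ₗ[k] H →ₗ[k] H →ₗ[k] H ⊗[k] V := tri₁ rtLS rtR m with hG
  set r2 : ∀ i, Coalgebra.Repr.{uK, uH, uH} k (r.right i) (H × H) :=
    fun i => Coalgebra.Repr.arbitrary k (r.right i) with hr2
  have step1 : ∑ i ∈ r.index, ∑ j ∈ (r1 i).index,
      LinearMap.rTensor V (conjMap k H ((r1 i).left j ⊗ₜ[k] r.right i))
        (δ (act ((r1 i).right j) v))
      = ∑ i ∈ r.index, ∑ j ∈ (r1 i).index,
        lift₃ G ((r1 i).left j ⊗ₜ[k] ((r1 i).right j ⊗ₜ[k] r.right i)) := by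
    refine Finset.sum_congr rfl fun i _ => Finset.sum_congr rfl fun j _ => ?_
    rw [lift₃_tmul, hG, tri₁_apply, rtLS_apply, rtR_apply, hmx, conj_decomp]
  have step2 : ∑ i ∈ r.index, ∑ j ∈ (r1 i).index,
      lift₃ G ((r1 i).left j ⊗ₜ[k] ((r1 i).right j ⊗ₜ[k] r.right i))
      = ∑ i ∈ r.index, ∑ j ∈ (r2 i).index,
        lift₃ G (r.left i ⊗ₜ[k] ((r2 i).left j ⊗ₜ[k] (r2 i).right j)) := by
    have e := congrArg (lift₃ G) (Coalgebra.sum_tmul_tmul_eq r r1 r2)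
    simpa only [map_sum] using e
  have step3 : ∑ i ∈ r.index, ∑ j ∈ (r2 i).index,
      lift₃ G (r.left i ⊗ₜ[k] ((r2 i).left j ⊗ₜ[k] (r2 i).right j))
      = ∑ i ∈ r.index, ∑ j ∈ (r2 i).index,
        rtLS (r.left i) (LinearMap.rTensor V (LinearMap.mulLeft k ((r2 i).left j))
          (LinearMap.lTensor H (act ((r2 i).right j)) (δ v))) := by
    refine Finset.sum_congr rfl fun i _ => ?_
    have : ∑ j ∈ (r2 i).index, lift₃ G (r.left i ⊗ₜ[k] ((r2 i).left j ⊗ₜ[k] (r2 i).right j))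
        = rtLS (r.left i) (∑ j ∈ (r2 i).index,
            LinearMap.rTensor V (LinearMap.mulRight k ((r2 i).right j))
              (δ (act ((r2 i).left j) v))) := by
      rw [map_sum]
      refine Finset.sum_congr rfl fun j _ => ?_
      rw [lift₃_tmul, hG, tri₁_apply, rtR_apply, hmx]
    rw [this, h (r.right i) v (r2 i), map_sum]
  set G₂ : H →ₗ[k] H →ₗ[k] H →ₗ[k] H ⊗[k] V := tri₂ rtLS rtL (ltA act) (δ v) with hG₂
  set r1' : ∀ i, Coalgebra.Repr.{uK, uH, uH} k (r.left i) (H × H) :=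
    fun i => Coalgebra.Repr.arbitrary k (r.left i) with hr1'
  have step4 : ∑ i ∈ r.index, ∑ j ∈ (r2 i).index,
      rtLS (r.left i) (LinearMap.rTensor V (LinearMap.mulLeft k ((r2 i).left j))
        (LinearMap.lTensor H (act ((r2 i).right j)) (δ v)))
      = ∑ i ∈ r.index, ∑ j ∈ (r1' i).index,
        lift₃ G₂ ((r1' i).left j ⊗ₜ[k] ((r1' i).right j ⊗ₜ[k] r.right i)) := by
    have e : ∑ i ∈ r.index, ∑ j ∈ (r2 i).index,
        rtLS (r.left i) (LinearMap.rTensor V (LinearMap.mulLeft k ((r2 i).left j))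
          (LinearMap.lTensor H (act ((r2 i).right j)) (δ v)))
        = ∑ i ∈ r.index, ∑ j ∈ (r2 i).index,
          lift₃ G₂ (r.left i ⊗ₜ[k] ((r2 i).left j ⊗ₜ[k] (r2 i).right j)) := by
      refine Finset.sum_congr rfl fun i _ => Finset.sum_congr rfl fun j _ => ?_
      rw [lift₃_tmul, hG₂, tri₂_apply, rtL_apply, ltA_apply]
    rw [e]
    have e2 := congrArg (lift₃ G₂) (Coalgebra.sum_tmul_tmul_eq r r1' r2)
    simp only [map_sum] at e2
    exact e2.symm
  have step5 : ∑ i ∈ r.index, ∑ j ∈ (r1' i).index,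
      lift₃ G₂ ((r1' i).left j ⊗ₜ[k] ((r1' i).right j ⊗ₜ[k] r.right i))
      = TensorProduct.lift (bi rtL (ltA act) (δ v)) ((1 : H) ⊗ₜ[k] a) := by
    have e : ∑ i ∈ r.index, ∑ j ∈ (r1' i).index,
        lift₃ G₂ ((r1' i).left j ⊗ₜ[k] ((r1' i).right j ⊗ₜ[k] r.right i))
        = ∑ i ∈ r.index, ∑ j ∈ (r1' i).index,
          TensorProduct.lift (bi rtL (ltA act) (δ v))
            ((HopfAlgebra.antipode (R := k) ((r1' i).left j) * (r1' i).right j) ⊗ₜ[k]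
              r.right i) := by
      refine Finset.sum_congr rfl fun i _ => Finset.sum_congr rfl fun j _ => ?_
      rw [lift₃_tmul, hG₂, tri₂_apply, TensorProduct.lift.tmul, bi_apply,
        rtLS_apply, rtL_apply, rtL_apply, LinearMap.mulLeft_mul, LinearMap.rTensor_comp]
      rfl
    rw [e]
    have e2 := congrArg (TensorProduct.lift (bi rtL (ltA act) (δ v))) (identity3 a r r1')
    simpa only [map_sum] using e2
  rw [step1, step2, step3, step4, step5, TensorProduct.lift.tmul, bi_apply, rtL_one,
    LinearMap.id_coe, id_eq, ltA_apply]

lemma TP_to_YDE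
    (h : ∀ (a : H) (v : V) (r : Coalgebra.Repr.{uK, uH, uH} k a (H × H))
      (r1 : ∀ i, Coalgebra.Repr.{uK, uH, uH} k (r.left i) (H × H)),
      ∑ i ∈ r.index, ∑ j ∈ (r1 i).index,
        LinearMap.rTensor V (conjMap k H ((r1 i).left j ⊗ₜ[k] r.right i))
          (δ (act ((r1 i).right j) v))
      = LinearMap.lTensor H (act a) (δ v)) :
    ∀ (a : H) (v : V) (r : Coalgebra.Repr.{uK, uH, uH} k a (H × H)),
      ∑ i ∈ r.index, LinearMap.rTensor V (LinearMap.mulRight k (r.right i))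
          (δ (act (r.left i) v))
      = ∑ i ∈ r.index, LinearMap.rTensor V (LinearMap.mulLeft k (r.left i))
          (LinearMap.lTensor H (act (r.right i)) (δ v)) := by
  intro a v r
  set m : H →ₗ[k] H ⊗[k] V := δ ∘ₗ act.flip v with hm
  have hmx : ∀ x : H, m x = δ (act x v) := fun x => rfl
  set B₃ : H →ₗ[k] H →ₗ[k] H →ₗ[k] H ⊗[k] V := tri₁ rtL rtR m with hB₃
  set rc : ∀ i, Coalgebra.Repr.{uK, uH, uH} k (r.right i) (H × H) :=
    fun i => Coalgebra.Repr.arbitrary k (r.right i) with hrc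
  set rc1 : ∀ i j, Coalgebra.Repr.{uK, uH, uH} k ((rc i).left j) (H × H) :=
    fun i j => Coalgebra.Repr.arbitrary k ((rc i).left j) with hrc1
  have step1 : ∑ i ∈ r.index, LinearMap.rTensor V (LinearMap.mulLeft k (r.left i))
      (LinearMap.lTensor H (act (r.right i)) (δ v))
      = ∑ i ∈ r.index, ∑ j ∈ (rc i).index, ∑ l ∈ (rc1 i j).index,
        lift₃ B₃ ((r.left i * HopfAlgebra.antipode (R := k) ((rc1 i j).left l)) ⊗ₜ[k]
          ((rc1 i j).right l ⊗ₜ[k] (rc i).right j)) := by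
    refine Finset.sum_congr rfl fun i _ => ?_
    rw [← h (r.right i) v (rc i) (rc1 i), map_sum]
    refine Finset.sum_congr rfl fun j _ => ?_
    rw [map_sum]
    refine Finset.sum_congr rfl fun l _ => ?_
    rw [lift₃_tmul, hB₃, tri₁_apply, rtL_apply, rtR_apply, hmx, conj_decomp,
      LinearMap.mulLeft_mul, LinearMap.rTensor_comp]
    rfl
  have step2 : ∑ i ∈ r.index, ∑ j ∈ (rc i).index, ∑ l ∈ (rc1 i j).index,
      lift₃ B₃ ((r.left i * HopfAlgebra.antipode (R := k) ((rc1 i j).left l)) ⊗ₜ[k]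
        ((rc1 i j).right l ⊗ₜ[k] (rc i).right j))
      = lift₃ B₃ ((1 : H) ⊗ₜ[k] Coalgebra.comul (R := k) a) := by
    rw [← identity4 a r rc rc1]
    simp [map_sum]
  have step3 : lift₃ B₃ ((1 : H) ⊗ₜ[k] Coalgebra.comul (R := k) a)
      = ∑ i ∈ r.index, LinearMap.rTensor V (LinearMap.mulRight k (r.right i))
          (δ (act (r.left i) v)) := by
    rw [← r.eq, TensorProduct.tmul_sum, map_sum]
    refine Finset.sum_congr rfl fun i _ => ?_
    rw [lift₃_tmul, hB₃, tri₁_apply, rtR_apply, hmx, rtL_one, LinearMap.id_coe, id_eq]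
  rw [step1, step2, step3]

end Aux7
section Aux8

set_option linter.unusedSectionVars false
set_option maxHeartbeats 1000000
set_option synthInstance.maxHeartbeats 1000000

open Coalgebra HopfAlgebra LinearMap

universe uK uH uW uW2
variable {k : Type uK} {H : Type uH} [Field k] [Ring H] [HopfAlgebra k H] [FiniteDimensional k H]
variable {V : Type uW} [AddCommGroup V] [Module k V]
variable (act : H →ₗ[k] V →ₗ[k] V) (δ : V →ₗ[k] H ⊗[k] V)

lemma lT_lT {W W2 : Type*} [AddCommGroup W] [Module k W] [AddCommGroup W2] [Module k W2]
    (f : V →ₗ[k] W) (g : W →ₗ[k] W2) (t : H ⊗[k] V) :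
    LinearMap.lTensor H g (LinearMap.lTensor H f t) = LinearMap.lTensor H (g ∘ₗ f) t := by
  induction t using TensorProduct.induction_on with
  | zero => simp
  | tmul x w => simp
  | add s t hs ht => simp [map_add, hs, ht]

lemma commute_rt_lt {W W2 : Type*} [AddCommGroup W] [Module k W] [AddCommGroup W2]
    [Module k W2] (g : H →ₗ[k] H) (f : W →ₗ[k] W2) (t : H ⊗[k] W) :
    LinearMap.rTensor W2 g (LinearMap.lTensor H f t) =
      LinearMap.lTensor H f (LinearMap.rTensor W g t) := by
  induction t using TensorProduct.induction_on with
  | zero => simp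
  | tmul x w => simp
  | add s t hs ht => simp [map_add, hs, ht]

lemma coassocδ
    (hco : (TensorProduct.assoc k H H V).toLinearMap ∘ₗ
        (TensorProduct.map (Coalgebra.comul (R := k)) LinearMap.id) ∘ₗ δ
      = (TensorProduct.map LinearMap.id δ) ∘ₗ δ) (u : V) :
    (TensorProduct.assoc k H H V)
        (LinearMap.rTensor V (Coalgebra.comul (R := k)) (δ u)) =
      LinearMap.lTensor H δ (δ u) := by
  have := LinearMap.congr_fun hco u
  simpa [LinearMap.rTensor, LinearMap.lTensor] using this

lemma hcu_pt
    (hcounit : (TensorProduct.lid k V).toLinearMap ∘ₗ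
        (TensorProduct.map (Coalgebra.counit (R := k)) LinearMap.id) ∘ₗ δ
      = LinearMap.id) (w : V) :
    evl (Coalgebra.counit (R := k) : Module.Dual k H) (δ w) = w := by
  have := LinearMap.congr_fun hcounit w
  simpa [evl, LinearMap.rTensor] using this

lemma TP_to_CP
    (hmul : ∀ (a b : H) (v : V), act (a * b) v = act a (act b v))
    (hco : (TensorProduct.assoc k H H V).toLinearMap ∘ₗ
        (TensorProduct.map (Coalgebra.comul (R := k)) LinearMap.id) ∘ₗ δ
      = (TensorProduct.map LinearMap.id δ) ∘ₗ δ)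
    (hTP : ∀ (a : H) (v : V) (r : Coalgebra.Repr.{uK, uH, uH} k a (H × H))
      (r1 : ∀ i, Coalgebra.Repr.{uK, uH, uH} k (r.left i) (H × H)),
      ∑ i ∈ r.index, ∑ j ∈ (r1 i).index,
        LinearMap.rTensor V (conjMap k H ((r1 i).left j ⊗ₜ[k] r.right i))
          (δ (act ((r1 i).right j) v))
      = LinearMap.lTensor H (act a) (δ v)) :
    ∀ (a b : H) (v : V) (r : Coalgebra.Repr.{uK, uH, uH} k a (H × H))
      (r1 : ∀ i, Coalgebra.Repr.{uK, uH, uH} k (r.left i) (H × H)),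
    ∑ i ∈ r.index, ∑ j ∈ (r1 i).index,
      LinearMap.rTensor (H ⊗[k] V) (conjMap k H ((r1 i).left j ⊗ₜ[k] r.right i))
        ((TensorProduct.assoc k H H V)
          (LinearMap.rTensor V (Coalgebra.comul (R := k)) (δ (act ((r1 i).right j * b) v))))
    = LinearMap.lTensor H (δ ∘ₗ act a) (δ (act b v)) := by
  intro a b v r r1
  have e1 : ∀ i ∈ r.index, ∀ j ∈ (r1 i).index,
      LinearMap.rTensor (H ⊗[k] V) (conjMap k H ((r1 i).left j ⊗ₜ[k] r.right i))
        ((TensorProduct.assoc k H H V)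
          (LinearMap.rTensor V (Coalgebra.comul (R := k)) (δ (act ((r1 i).right j * b) v))))
      = LinearMap.lTensor H δ
          (LinearMap.rTensor V (conjMap k H ((r1 i).left j ⊗ₜ[k] r.right i))
            (δ (act ((r1 i).right j) (act b v)))) := by
    intro i _ j _
    rw [coassocδ δ hco, hmul, commute_rt_lt]
  calc ∑ i ∈ r.index, ∑ j ∈ (r1 i).index,
        LinearMap.rTensor (H ⊗[k] V) (conjMap k H ((r1 i).left j ⊗ₜ[k] r.right i))
          ((TensorProduct.assoc k H H V)
            (LinearMap.rTensor V (Coalgebra.comul (R := k))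
              (δ (act ((r1 i).right j * b) v))))
      = ∑ i ∈ r.index, ∑ j ∈ (r1 i).index,
          LinearMap.lTensor H δ
            (LinearMap.rTensor V (conjMap k H ((r1 i).left j ⊗ₜ[k] r.right i))
              (δ (act ((r1 i).right j) (act b v)))) := by
        refine Finset.sum_congr rfl fun i hi => Finset.sum_congr rfl fun j hj => ?_
        exact e1 i hi j hj
    _ = LinearMap.lTensor H δ (∑ i ∈ r.index, ∑ j ∈ (r1 i).index,
          LinearMap.rTensor V (conjMap k H ((r1 i).left j ⊗ₜ[k] r.right i))
            (δ (act ((r1 i).right j) (act b v)))) := by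
        simp only [map_sum]
    _ = LinearMap.lTensor H δ (LinearMap.lTensor H (act a) (δ (act b v))) := by
        rw [hTP a (act b v) r r1]
    _ = LinearMap.lTensor H (δ ∘ₗ act a) (δ (act b v)) := lT_lT (act a) δ _

lemma CP_to_TP
    (h1 : ∀ v : V, act 1 v = v)
    (hco : (TensorProduct.assoc k H H V).toLinearMap ∘ₗ
        (TensorProduct.map (Coalgebra.comul (R := k)) LinearMap.id) ∘ₗ δ
      = (TensorProduct.map LinearMap.id δ) ∘ₗ δ)
    (hcounit : (TensorProduct.lid k V).toLinearMap ∘ₗ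
        (TensorProduct.map (Coalgebra.counit (R := k)) LinearMap.id) ∘ₗ δ
      = LinearMap.id)
    (hCP : ∀ (a b : H) (v : V) (r : Coalgebra.Repr.{uK, uH, uH} k a (H × H))
      (r1 : ∀ i, Coalgebra.Repr.{uK, uH, uH} k (r.left i) (H × H)),
      ∑ i ∈ r.index, ∑ j ∈ (r1 i).index,
        LinearMap.rTensor (H ⊗[k] V) (conjMap k H ((r1 i).left j ⊗ₜ[k] r.right i))
          ((TensorProduct.assoc k H H V)
            (LinearMap.rTensor V (Coalgebra.comul (R := k)) (δ (act ((r1 i).right j * b) v))))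
      = LinearMap.lTensor H (δ ∘ₗ act a) (δ (act b v))) :
    ∀ (a : H) (v : V) (r : Coalgebra.Repr.{uK, uH, uH} k a (H × H))
      (r1 : ∀ i, Coalgebra.Repr.{uK, uH, uH} k (r.left i) (H × H)),
      ∑ i ∈ r.index, ∑ j ∈ (r1 i).index,
        LinearMap.rTensor V (conjMap k H ((r1 i).left j ⊗ₜ[k] r.right i))
          (δ (act ((r1 i).right j) v))
      = LinearMap.lTensor H (act a) (δ v) := by
  intro a v r r1
  have h := hCP a 1 v r r1
  simp only [mul_one, h1] at h
  have hK := congrArg (LinearMap.lTensor H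
    (evl (Coalgebra.counit (R := k) : Module.Dual k H) : H ⊗[k] V →ₗ[k] V)) h
  rw [map_sum] at hK
  have hid : (evl (Coalgebra.counit (R := k) : Module.Dual k H) : H ⊗[k] V →ₗ[k] V) ∘ₗ δ
      = LinearMap.id := LinearMap.ext (hcu_pt δ hcounit)
  calc ∑ i ∈ r.index, ∑ j ∈ (r1 i).index,
        LinearMap.rTensor V (conjMap k H ((r1 i).left j ⊗ₜ[k] r.right i))
          (δ (act ((r1 i).right j) v))
      = ∑ i ∈ r.index, ∑ j ∈ (r1 i).index,
          LinearMap.lTensor H (evl (Coalgebra.counit (R := k) : Module.Dual k H))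
            (LinearMap.rTensor (H ⊗[k] V) (conjMap k H ((r1 i).left j ⊗ₜ[k] r.right i))
              ((TensorProduct.assoc k H H V)
                (LinearMap.rTensor V (Coalgebra.comul (R := k))
                  (δ (act ((r1 i).right j) v))))) := by
        refine Finset.sum_congr rfl fun i _ => Finset.sum_congr rfl fun j _ => ?_
        rw [coassocδ δ hco, commute_rt_lt, lT_lT δ _, hid]
        simp
    _ = LinearMap.lTensor H (evl (Coalgebra.counit (R := k) : Module.Dual k H))
          (LinearMap.lTensor H (δ ∘ₗ act a) (δ v)) := by
        rw [← hK]
        refine Finset.sum_congr rfl fun i _ => ?_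
        rw [map_sum]
    _ = LinearMap.lTensor H (act a) (δ v) := by
        rw [lT_lT, ← LinearMap.comp_assoc, hid]
        simp

end Aux8
section Aux9

set_option linter.unusedSectionVars false
set_option maxHeartbeats 1000000
set_option synthInstance.maxHeartbeats 1000000

open Coalgebra HopfAlgebra LinearMap

universe uK uH uW
variable {k : Type uK} {H : Type uH} [Field k] [Ring H] [HopfAlgebra k H] [FiniteDimensional k H]
variable {V : Type uW} [AddCommGroup V] [Module k V]
variable (act : H →ₗ[k] V →ₗ[k] V) (δ : V →ₗ[k] H ⊗[k] V)

lemma pure_LHS (φ ψ : Module.Dual k H) (a b : H) (v : V)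
    (r : Coalgebra.Repr.{uK, uH, uH} k a (H × H))
    (r1 : ∀ i, Coalgebra.Repr.{uK, uH, uH} k (r.left i) (H × H)) :
    doubleAct k H act δ ((doubleMulYD k H ((φ ⊗ₜ[k] a) ⊗ₜ[k] (ψ ⊗ₜ[k] b))) ⊗ₜ[k] v)
      = evl φ (evl ψ (∑ i ∈ r.index, ∑ j ∈ (r1 i).index,
          LinearMap.rTensor (H ⊗[k] V) (conjMap k H ((r1 i).left j ⊗ₜ[k] r.right i))
            ((TensorProduct.assoc k H H V)
              (LinearMap.rTensor V (Coalgebra.comul (R := k))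
                (δ (act ((r1 i).right j * b) v)))))) := by
  rw [doubleMulYD_tmul φ ψ a b r r1]
  simp only [TensorProduct.sum_tmul, map_sum]
  refine Finset.sum_congr rfl fun i _ => Finset.sum_congr rfl fun j _ => ?_
  rw [doubleAct_tmul, evl_dualConv, conjDual_tmul, evl_comp]

lemma pure_RHS (φ ψ : Module.Dual k H) (a b : H) (v : V) :
    doubleAct k H act δ ((φ ⊗ₜ[k] a) ⊗ₜ[k] doubleAct k H act δ ((ψ ⊗ₜ[k] b) ⊗ₜ[k] v))
      = evl φ (evl ψ (LinearMap.lTensor H (δ ∘ₗ act a) (δ (act b v)))) := by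
  rw [doubleAct_tmul, doubleAct_tmul, evl_lTensor (act a) ψ, evl_lTensor δ ψ,
    lT_lT (act a) δ]

lemma CP_to_assoc
    (hCP : ∀ (a b : H) (v : V) (r : Coalgebra.Repr.{uK, uH, uH} k a (H × H))
      (r1 : ∀ i, Coalgebra.Repr.{uK, uH, uH} k (r.left i) (H × H)),
      ∑ i ∈ r.index, ∑ j ∈ (r1 i).index,
        LinearMap.rTensor (H ⊗[k] V) (conjMap k H ((r1 i).left j ⊗ₜ[k] r.right i))
          ((TensorProduct.assoc k H H V)
            (LinearMap.rTensor V (Coalgebra.comul (R := k)) (δ (act ((r1 i).right j * b) v))))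
      = LinearMap.lTensor H (δ ∘ₗ act a) (δ (act b v))) :
    ∀ (x y : (Module.Dual k H) ⊗[k] H) (v : V),
      doubleAct k H act δ ((doubleMulYD k H (x ⊗ₜ[k] y)) ⊗ₜ[k] v)
        = doubleAct k H act δ (x ⊗ₜ[k] (doubleAct k H act δ (y ⊗ₜ[k] v))) := by
  have pure : ∀ (φ ψ : Module.Dual k H) (a b : H) (v : V),
      doubleAct k H act δ ((doubleMulYD k H ((φ ⊗ₜ[k] a) ⊗ₜ[k] (ψ ⊗ₜ[k] b))) ⊗ₜ[k] v)
        = doubleAct k H act δ ((φ ⊗ₜ[k] a) ⊗ₜ[k] doubleAct k H act δ ((ψ ⊗ₜ[k] b) ⊗ₜ[k] v)) := by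
    intro φ ψ a b v
    rw [pure_LHS act δ φ ψ a b v (Coalgebra.Repr.arbitrary k a)
      (fun i => Coalgebra.Repr.arbitrary k _),
      hCP a b v (Coalgebra.Repr.arbitrary k a) (fun i => Coalgebra.Repr.arbitrary k _),
      ← pure_RHS act δ φ ψ a b v]
  intro x y v
  induction x using TensorProduct.induction_on with
  | zero => simp [TensorProduct.zero_tmul]
  | tmul φ a =>
      induction y using TensorProduct.induction_on with
      | zero => simp [TensorProduct.zero_tmul, TensorProduct.tmul_zero]
      | tmul ψ b => exact pure φ ψ a b v
      | add y1 y2 h1 h2 =>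
          simp only [TensorProduct.tmul_add, TensorProduct.add_tmul, map_add, h1, h2]
  | add x1 x2 h1 h2 =>
      simp only [TensorProduct.tmul_add, TensorProduct.add_tmul, map_add, h1, h2]

lemma assoc_to_CP
    (hA : ∀ (x y : (Module.Dual k H) ⊗[k] H) (v : V),
      doubleAct k H act δ ((doubleMulYD k H (x ⊗ₜ[k] y)) ⊗ₜ[k] v)
        = doubleAct k H act δ (x ⊗ₜ[k] (doubleAct k H act δ (y ⊗ₜ[k] v)))) :
    ∀ (a b : H) (v : V) (r : Coalgebra.Repr.{uK, uH, uH} k a (H × H))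
      (r1 : ∀ i, Coalgebra.Repr.{uK, uH, uH} k (r.left i) (H × H)),
      ∑ i ∈ r.index, ∑ j ∈ (r1 i).index,
        LinearMap.rTensor (H ⊗[k] V) (conjMap k H ((r1 i).left j ⊗ₜ[k] r.right i))
          ((TensorProduct.assoc k H H V)
            (LinearMap.rTensor V (Coalgebra.comul (R := k)) (δ (act ((r1 i).right j * b) v))))
      = LinearMap.lTensor H (δ ∘ₗ act a) (δ (act b v)) := by
  intro a b v r r1
  refine evl_inj fun ψ => ?_
  refine evl_inj fun φ => ?_
  rw [← pure_LHS act δ φ ψ a b v r r1, ← pure_RHS act δ φ ψ a b v]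
  exact hA (φ ⊗ₜ[k] a) (ψ ⊗ₜ[k] b) v

lemma unit_act
    (h1 : ∀ v : V, act 1 v = v)
    (hcounit : (TensorProduct.lid k V).toLinearMap ∘ₗ
        (TensorProduct.map (Coalgebra.counit (R := k)) LinearMap.id) ∘ₗ δ
      = LinearMap.id) (v : V) :
    doubleAct k H act δ (((Coalgebra.counit (R := k) : Module.Dual k H)
        ⊗ₜ[k] (1 : H)) ⊗ₜ[k] v) = v := by
  rw [doubleAct_tmul, h1, hcu_pt δ hcounit]

end Aux9

/-- For a finite-dimensional Hopf algebra `H`, a vector space `V` which is both a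
unital left `H`-module and a counital coassociative left `H`-comodule satisfies the
Yetter–Drinfeld compatibility condition if and only if the map
`(φ ⊗ a) ▷ v = Σ ⟨(a ▷ v)₋₁, φ⟩ (a ▷ v)₀` makes `V` a left module over the
Drinfeld double `D(H) = H* ⊗ H`. -/
theorem yetter_drinfeld_iff_double_module
    (act : H →ₗ[k] V →ₗ[k] V)
    (hact_one : ∀ v : V, act 1 v = v)
    (hact_mul : ∀ (a b : H) (v : V), act (a * b) v = act a (act b v))
    (δ : V →ₗ[k] H ⊗[k] V)
    (hcoassoc : (TensorProduct.assoc k H H V).toLinearMap ∘ₗ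
        (TensorProduct.map (Coalgebra.comul (R := k)) LinearMap.id) ∘ₗ δ
      = (TensorProduct.map LinearMap.id δ) ∘ₗ δ)
    (hcounit : (TensorProduct.lid k V).toLinearMap ∘ₗ
        (TensorProduct.map (Coalgebra.counit (R := k)) LinearMap.id) ∘ₗ δ
      = LinearMap.id) :
    ydLHS k H act δ = ydRHS k H act δ ↔
      ((∀ (x y : (Module.Dual k H) ⊗[k] H) (v : V),
          doubleAct k H act δ ((doubleMulYD k H (x ⊗ₜ[k] y)) ⊗ₜ[k] v)
            = doubleAct k H act δ (x ⊗ₜ[k] (doubleAct k H act δ (y ⊗ₜ[k] v)))) ∧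
        (∀ v : V,
          doubleAct k H act δ (((Coalgebra.counit (R := k) : Module.Dual k H)
              ⊗ₜ[k] (1 : H)) ⊗ₜ[k] v) = v)) := by
  rw [yd_iff_YDE act δ]
  constructor
  · intro hY
    exact ⟨CP_to_assoc act δ (TP_to_CP act δ hact_mul hcoassoc (YDE_to_TP act δ hY)),
      fun v => unit_act act δ hact_one hcounit v⟩
  · rintro ⟨hA, _⟩
    exact TP_to_YDE act δ (CP_to_TP act δ hact_one hcoassoc hcounit (assoc_to_CP act δ hA))
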